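/- Let x be a future-directed unit timelike vector in ℝ³ and v ∈ SO⁺(2,1) with v·x ≠ x. Then the three vectors v·x − x, v·x, and x ∧ v·x form a basis of ℝ³. In particular, for any vector d ∈ ℝ³ there exist unique σ, τ, ν ∈ ℝ with d = σ(v·x − x) + τ·v·x + ν·(x ∧ v·x). -/

import Mathlib

open Matrix Real

noncomputable section

/-- The Minkowski inner product on ℝ³, of signature (−,+,+). -/
def eta (x y : Fin 3 → ℝ) : ℝ := -(x 0 * y 0) + x 1 * y 1 + x 2 * y 2

/-- The Minkowski metric as a 3×3 matrix, η = diag(−1,1,1). -/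
def etaMat : Matrix (Fin 3) (Fin 3) ℝ := Matrix.diagonal ![(-1 : ℝ), 1, 1]

/-- Membership in the proper orthochronous Lorentz group SO⁺(2,1):
vᵀηv = η, det v = 1, v₀₀ > 0. -/
def IsPOLorentz (v : Matrix (Fin 3) (Fin 3) ℝ) : Prop :=
  vᵀ * etaMat * v = etaMat ∧ v.det = 1 ∧ 0 < v 0 0

/-- The Minkowski cross product x∧y, the unique vector with
η(x∧y, z) = det(x,y,z) for all z. -/
def mcross (x y : Fin 3 → ℝ) : Fin 3 → ℝ :=
  ![-(x 1 * y 2 - x 2 * y 1), x 2 * y 0 - x 0 * y 2, x 0 * y 1 - x 1 * y 0]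

/-!
Both `x` and `y = v·x` lie on the future unit hyperboloid. The determinant of
`(y - x, y, x ∧ y)` equals `η(x,x) η(y,y) - η(x,y)² = 1 - η(x,y)²`, and the reversed
Cauchy–Schwarz inequality `η(x,y) ≤ -1`, with equality only for `x = y`, makes it nonzero.
Both halves of that inequality come from the Lagrange-type identity
`(x⁰y⁰)² - (1 + x¹y¹ + x²y²)² = (x¹-y¹)² + (x²-y²)² + (x¹y²-x²y¹)²` on the hyperboloid.
-/

lemma eta_eq_dotProduct_mulVec (x y : Fin 3 → ℝ) : eta x y = x ⬝ᵥ etaMat *ᵥ y := by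
  simp [eta, etaMat, dotProduct, Fin.sum_univ_three, mulVec_diagonal]

lemma eta_mulVec_mulVec {v : Matrix (Fin 3) (Fin 3) ℝ} (hv : vᵀ * etaMat * v = etaMat)
    (x y : Fin 3 → ℝ) : eta (v *ᵥ x) (v *ᵥ y) = eta x y := by
  rw [eta_eq_dotProduct_mulVec, eta_eq_dotProduct_mulVec, ← vecMul_transpose,
    ← dotProduct_mulVec, mulVec_mulVec, mulVec_mulVec, hv]

lemma sq_mul_sub_sq_of_eta_self (x y : Fin 3 → ℝ) (hx : eta x x = -1) (hy : eta y y = -1) :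
    (x 0 * y 0) ^ 2 - (1 + x 1 * y 1 + x 2 * y 2) ^ 2
      = (x 1 - y 1) ^ 2 + (x 2 - y 2) ^ 2 + (x 1 * y 2 - x 2 * y 1) ^ 2 := by
  simp only [eta] at hx hy
  linear_combination (-(y 0 ^ 2)) * hx - (1 + x 1 ^ 2 + x 2 ^ 2) * hy

lemma eta_le_neg_one {x y : Fin 3 → ℝ} (hx : eta x x = -1) (hy : eta y y = -1)
    (hx0 : 0 < x 0) (hy0 : 0 < y 0) : eta x y ≤ -1 := by
  have hsq : (1 + x 1 * y 1 + x 2 * y 2) ^ 2 ≤ (x 0 * y 0) ^ 2 := by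
    have := sq_mul_sub_sq_of_eta_self x y hx hy
    nlinarith [sq_nonneg (x 1 - y 1), sq_nonneg (x 2 - y 2), sq_nonneg (x 1 * y 2 - x 2 * y 1)]
  have := (abs_le_of_sq_le_sq' hsq (by positivity)).2
  simp only [eta]
  linarith

lemma eq_of_eta_eq_neg_one {x y : Fin 3 → ℝ} (hx : eta x x = -1) (hy : eta y y = -1)
    (hxy : eta x y = -1) : x = y := by
  have hs : x 0 * y 0 = 1 + x 1 * y 1 + x 2 * y 2 := by simp only [eta] at hxy; linarith
  have key := sq_mul_sub_sq_of_eta_self x y hx hy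
  rw [hs, sub_self] at key
  have h1 : x 1 = y 1 := by
    nlinarith [sq_nonneg (x 1 - y 1), sq_nonneg (x 2 - y 2), sq_nonneg (x 1 * y 2 - x 2 * y 1)]
  have h2 : x 2 = y 2 := by
    nlinarith [sq_nonneg (x 1 - y 1), sq_nonneg (x 2 - y 2), sq_nonneg (x 1 * y 2 - x 2 * y 1)]
  have h0 : x 0 = y 0 := by
    simp only [eta] at hx
    rw [← h1, ← h2] at hs
    nlinarith [sq_nonneg (x 0 - y 0)]
  ext i; fin_cases i
  exacts [h0, h1, h2]

lemma pos_of_eta_neg {y z : Fin 3 → ℝ} (hy : eta y y = -1) (hz : eta z z = -1) (hz0 : 0 < z 0)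
    (hyz : eta y z < 0) : 0 < y 0 := by
  have hy0 : y 0 ≠ 0 := by
    intro h
    simp only [eta, h] at hy
    nlinarith [sq_nonneg (y 1), sq_nonneg (y 2)]
  refine hy0.lt_or_gt.resolve_left fun hneg => ?_
  have hny : eta (-y) (-y) = -1 := by simpa [eta] using hy
  have := eta_le_neg_one hny hz (by simpa using hneg) hz0
  simp only [eta, Pi.neg_apply] at this hyz
  linarith

lemma IsPOLorentz.mulVec_pos {v : Matrix (Fin 3) (Fin 3) ℝ} (hv : IsPOLorentz v)
    {x : Fin 3 → ℝ} (hx : eta x x = -1) (hx0 : 0 < x 0) : 0 < (v *ᵥ x) 0 := by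
  obtain ⟨hη, -, hv00⟩ := hv
  -- `v e₀` is future-directed because `v₀₀ > 0`, and `η(v x, v e₀) = η(x, e₀) = -x⁰ < 0`.
  set e : Fin 3 → ℝ := ![1, 0, 0]
  have he : eta e e = -1 := by simp [e, eta]
  refine pos_of_eta_neg (z := v *ᵥ e) (by rw [eta_mulVec_mulVec hη, hx])
    (by rw [eta_mulVec_mulVec hη, he])
    (by simpa [e, mulVec, dotProduct, Fin.sum_univ_three] using hv00) ?_
  rw [eta_mulVec_mulVec hη]
  simpa [e, eta] using hx0

lemma det_of_sub_mcross (x y : Fin 3 → ℝ) :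
    (of ![y - x, y, mcross x y]).det = eta x x * eta y y - eta x y ^ 2 := by
  simp [det_fin_three, mcross, eta]; ring

lemma LinearIndependent.existsUnique_fin_three {K V : Type*} [Ring K] [AddCommGroup V]
    [Module K V] {b : Fin 3 → V} (hli : LinearIndependent K b)
    (hspan : Submodule.span K (Set.range b) = ⊤) (d : V) :
    ∃! c : K × K × K, d = c.1 • b 0 + c.2.1 • b 1 + c.2.2 • b 2 := by
  obtain ⟨c, hc⟩ :=
    (Submodule.mem_span_range_iff_exists_fun K).1 (hspan ▸ Submodule.mem_top : d ∈ _)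
  rw [Fin.sum_univ_three] at hc
  refine ⟨(c 0, c 1, c 2), hc.symm, ?_⟩
  rintro ⟨σ, τ, ν⟩ (h : d = σ • b 0 + τ • b 1 + ν • b 2)
  have hzero : ∑ i, ![σ - c 0, τ - c 1, ν - c 2] i • b i = 0 := by
    simp only [Fin.sum_univ_three, Matrix.cons_val, sub_smul]
    linear_combination (norm := abel) -(h + hc)
  have hcoef := Fintype.linearIndependent_iff.1 hli _ hzero
  have h0 := hcoef 0
  have h1 := hcoef 1
  have h2 := hcoef 2
  simp only [Matrix.cons_val, sub_eq_zero] at h0 h1 h2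
  rw [h0, h1, h2]

/-- the vectors v·x − x, v·x, x∧v·x form a basis of ℝ³, so
every vector d has a unique decomposition d = σ(v·x−x) + τ·v·x + ν·(x∧v·x). -/
theorem holonomy_basis
    (x : Fin 3 → ℝ) (v : Matrix (Fin 3) (Fin 3) ℝ)
    (hx : eta x x = -1) (hxfut : 0 < x 0)
    (hv : IsPOLorentz v) (hvx : v.mulVec x ≠ x) :
    LinearIndependent ℝ ![v.mulVec x - x, v.mulVec x, mcross x (v.mulVec x)] ∧
    Submodule.span ℝ
        (Set.range ![v.mulVec x - x, v.mulVec x, mcross x (v.mulVec x)]) = ⊤ ∧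
    ∀ d : Fin 3 → ℝ, ∃! c : ℝ × ℝ × ℝ,
      d = c.1 • (v.mulVec x - x) + c.2.1 • v.mulVec x
            + c.2.2 • mcross x (v.mulVec x) := by
  set y := v *ᵥ x
  have hy : eta y y = -1 := (eta_mulVec_mulVec hv.1 x x).trans hx
  have hxy : eta x y < -1 :=
    (eta_le_neg_one hx hy hxfut (hv.mulVec_pos hx hxfut)).lt_of_ne
      fun h => hvx (eq_of_eta_eq_neg_one hx hy h).symm
  have hdet : (of ![y - x, y, mcross x y]).det ≠ 0 := by
    rw [det_of_sub_mcross, hx, hy]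
    nlinarith
  have hli : LinearIndependent ℝ ![y - x, y, mcross x y] :=
    linearIndependent_rows_iff_isUnit.2 ((isUnit_iff_isUnit_det _).2 hdet.isUnit)
  have hspan := hli.span_eq_top_of_card_eq_finrank (by simp)
  exact ⟨hli, hspan, hli.existsUnique_fin_three hspan⟩
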